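/- arXiv:2007.11558 — 2 statements merged into one kernel-verified Lean document; each statement's English description precedes it below -/
import Mathlib

section
/- If ν is a P-stationary probability measure, then ν is f-quasi-invariant: f_*ν is absolutely continuous with respect to ν, and f⁻¹_*ν is absolutely continuous with respect to ν. -/
/-!
Stationarity tested against a continuous `ψ ≥ 0` gives
`∫ p · ψ ∘ f dν ≤ ∫ (p · ψ ∘ f + (1 - p) · ψ ∘ f⁻¹) dν = ∫ ψ dν`, and `p ≥ ε > 0` on the compact
space `M`, so `∫ ψ d(f_*ν) ≤ ε⁻¹ ∫ ψ dν`. Approximating indicators of closed sets by continuous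
functions and using inner regularity of finite Borel measures by closed sets turns this into
`f_*ν ≤ ε⁻¹ ν`. The case of `f⁻¹` is the same argument for the stationary pair `(f⁻¹, 1 - p)`.
-/

open MeasureTheory Filter
open scoped ENNReal NNReal BoundedContinuousFunction

namespace MeasureTheory

section Comparison

variable {Ω : Type*} [MeasurableSpace Ω] [TopologicalSpace Ω]

theorem measure_isClosed_le_of_forall_lintegral_le [HasOuterApproxClosed Ω]
    [OpensMeasurableSpace Ω] {μ ν : Measure Ω} [IsFiniteMeasure ν] {c : ℝ≥0∞} (hc : c ≠ ∞)
    (h : ∀ ψ : Ω →ᵇ ℝ≥0, ∫⁻ x, ψ x ∂μ ≤ c * ∫⁻ x, ψ x ∂ν) {F : Set Ω} (hF : IsClosed F) :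
    μ F ≤ c * ν F :=
  ge_of_tendsto'
    (ENNReal.Tendsto.const_mul (HasOuterApproxClosed.tendsto_lintegral_apprSeq hF ν) (.inr hc))
    fun n ↦ (HasOuterApproxClosed.measure_le_lintegral hF μ n).trans (h _)

variable [TopologicalSpace.PseudoMetrizableSpace Ω] [BorelSpace Ω]
  {μ ν : Measure Ω} [IsFiniteMeasure μ] [IsFiniteMeasure ν]

theorem Measure.le_smul_of_forall_lintegral_le {c : ℝ≥0∞} (hc : c ≠ ∞)
    (h : ∀ ψ : Ω →ᵇ ℝ≥0, ∫⁻ x, ψ x ∂μ ≤ c * ∫⁻ x, ψ x ∂ν) : μ ≤ c • ν := by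
  refine Measure.le_iff.2 fun s hs ↦ ?_
  rw [hs.measure_eq_iSup_isClosed_of_ne_top (measure_ne_top μ s), Measure.smul_apply, smul_eq_mul]
  exact iSup₂_le fun F hFs ↦ iSup_le fun hF ↦
    (measure_isClosed_le_of_forall_lintegral_le hc h hF).trans (by gcongr)

theorem Measure.le_smul_of_forall_integral_le {c : ℝ}
    (h : ∀ ψ : Ω →ᵇ ℝ≥0, ∫ x, (ψ x : ℝ) ∂μ ≤ c * ∫ x, (ψ x : ℝ) ∂ν) :
    μ ≤ ENNReal.ofReal c • ν := by
  have lintegral_eq (ρ : Measure Ω) [IsFiniteMeasure ρ] (ψ : Ω →ᵇ ℝ≥0) :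
      ∫⁻ x, ψ x ∂ρ = ENNReal.ofReal (∫ x, (ψ x : ℝ) ∂ρ) := by
    rw [← BoundedContinuousFunction.toReal_lintegral_coe_eq_integral,
      ENNReal.ofReal_toReal (ψ.lintegral_lt_top_of_nnreal ρ).ne]
  refine Measure.le_smul_of_forall_lintegral_le ENNReal.ofReal_ne_top fun ψ ↦ ?_
  rw [lintegral_eq, lintegral_eq, ← ENNReal.ofReal_mul' (by positivity)]
  exact ENNReal.ofReal_le_ofReal (h ψ)

end Comparison

section Stationary

variable {M : Type*} [TopologicalSpace M] [MeasurableSpace M]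

/-- `P^*ν = ν` for the Markov operator `Pψ = p · ψ ∘ f + (1 - p) · ψ ∘ f⁻¹`. -/
def IsStationaryMeasure (f : M ≃ₜ M) (p : C(M, ℝ)) (ν : Measure M) : Prop :=
  ∀ ψ : C(M, ℝ), ∫ x, (p x * ψ (f x) + (1 - p x) * ψ (f.symm x)) ∂ν = ∫ x, ψ x ∂ν

variable {f : M ≃ₜ M} {p : C(M, ℝ)} {ν : Measure M}

theorem IsStationaryMeasure.symm (h : IsStationaryMeasure f p ν) :
    IsStationaryMeasure f.symm (1 - p) ν := fun ψ ↦ by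
  simpa [add_comm] using h ψ

variable [CompactSpace M] [OpensMeasurableSpace M] [IsFiniteMeasure ν]

theorem IsStationaryMeasure.mul_integral_comp_le (h : IsStationaryMeasure f p ν) {ε : ℝ}
    (hε : ∀ x, ε ≤ p x) (hp : ∀ x, p x ≤ 1) {ψ : C(M, ℝ)} (hψ : 0 ≤ ψ) :
    ε * ∫ x, ψ (f x) ∂ν ≤ ∫ x, ψ x ∂ν := by
  have integrable {g : M → ℝ} (hg : Continuous g) : Integrable g ν :=
    hg.integrable_of_hasCompactSupport (.of_compactSpace g)
  calc ε * ∫ x, ψ (f x) ∂ν = ∫ x, ε * ψ (f x) ∂ν := (integral_const_mul ..).symm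
    _ ≤ ∫ x, (p x * ψ (f x) + (1 - p x) * ψ (f.symm x)) ∂ν := by
      refine integral_mono (integrable (by fun_prop)) (integrable (by fun_prop)) fun x ↦ ?_
      have hψf : 0 ≤ ψ (f x) := hψ (f x)
      have hψf' : 0 ≤ ψ (f.symm x) := hψ (f.symm x)
      nlinarith [hε x, hp x]
    _ = ∫ x, ψ x ∂ν := h ψ

variable [TopologicalSpace.PseudoMetrizableSpace M] [BorelSpace M]

theorem IsStationaryMeasure.map_le_smul (h : IsStationaryMeasure f p ν) {ε : ℝ} (hε₀ : 0 < ε)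
    (hε : ∀ x, ε ≤ p x) (hp : ∀ x, p x ≤ 1) :
    Measure.map f ν ≤ ENNReal.ofReal ε⁻¹ • ν := by
  refine Measure.le_smul_of_forall_integral_le fun ψ ↦ ?_
  rw [integral_map f.continuous.aemeasurable (by fun_prop), le_inv_mul_iff₀ hε₀]
  exact h.mul_integral_comp_le hε hp (ψ := ⟨fun x ↦ ψ x, by fun_prop⟩) fun x ↦ (ψ x).2

theorem IsStationaryMeasure.map_absolutelyContinuous (h : IsStationaryMeasure f p ν)
    (hp : ∀ x, p x ∈ Set.Ioo (0 : ℝ) 1) : Measure.map f ν ≪ ν := by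
  obtain ⟨ε, hε₀, hε⟩ := isCompact_univ.exists_forall_le' p.continuous.continuousOn
    fun x _ ↦ (hp x).1
  exact Measure.absolutelyContinuous_of_le_smul
    (h.map_le_smul hε₀ (fun x ↦ hε x trivial) fun x ↦ (hp x).2.le)

end Stationary

end MeasureTheory

/-- A `P`-stationary measure is `f`-quasi-invariant: both `f_*ν` and `f⁻¹_*ν` are
absolutely continuous with respect to `ν`. -/
theorem stationary_measure_quasi_invariant
    {M : Type*} [MetricSpace M] [CompactSpace M]
    [MeasurableSpace M] [BorelSpace M]
    (f : M ≃ₜ M) (p : C(M, ℝ)) (hp : ∀ x, p x ∈ Set.Ioo (0 : ℝ) 1)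
    (ν : Measure M) [IsProbabilityMeasure ν]
    (hstat : ∀ ψ : C(M, ℝ),
      ∫ x, (p x * ψ (f x) + (1 - p x) * ψ (f.symm x)) ∂ν = ∫ x, ψ x ∂ν) :
    Measure.map f ν ≪ ν ∧ Measure.map f.symm ν ≪ ν := by
  have h : IsStationaryMeasure f p ν := hstat
  refine ⟨h.map_absolutelyContinuous hp, h.symm.map_absolutelyContinuous fun x ↦ ?_⟩
  simpa [and_comm] using hp x
end

section
/- Suppose p/(q∘f) = (π∘f)/π μ-almost everywhere for some positive integrable function π with ∫π dμ = 1, where μ is f-invariant. Then the measure ν = π·μ is P-stationary: for every continuous ψ, ∫ (p·ψ∘f + q·ψ∘f⁻¹) π dμ = ∫ ψ π dμ. -/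
open MeasureTheory

/-!
The cocycle identity says that the flux `p·π` along `x ↦ f x` equals the flux `(q·π)∘f` back
along `f x ↦ x`. Since `f` preserves `μ`, a change of variables then moves the `f`-step of `P`
onto the `q`-part of `ψ·π` and the `f⁻¹`-step onto its `p`-part, and `p + q = 1`.
-/

namespace MeasureTheory.MeasurePreserving

variable {α : Type*} [MeasurableSpace α] {μ : Measure α} {e : α → α}

theorem integral_comp_mul_of_ae_eq_comp (he : MeasurePreserving e μ μ)
    (he' : MeasurableEmbedding e) {g h : α → ℝ} (hgh : g =ᵐ[μ] h ∘ e) (ψ : α → ℝ) :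
    ∫ x, ψ (e x) * g x ∂μ = ∫ x, ψ x * h x ∂μ := by
  calc ∫ x, ψ (e x) * g x ∂μ = ∫ x, ψ (e x) * h (e x) ∂μ :=
        integral_congr_ae (Filter.EventuallyEq.rfl.mul hgh)
    _ = ∫ x, ψ x * h x ∂μ := he.integral_comp he' (fun y => ψ y * h y)

theorem integral_comp_mul_of_ae_eq_comp_of_leftInverse (he : MeasurePreserving e μ μ)
    (he' : MeasurableEmbedding e) {e' : α → α} (hee' : Function.LeftInverse e' e)
    {g h : α → ℝ} (hgh : g =ᵐ[μ] h ∘ e) (ψ : α → ℝ) :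
    ∫ x, ψ (e' x) * h x ∂μ = ∫ x, ψ x * g x ∂μ := by
  calc ∫ x, ψ (e' x) * h x ∂μ = ∫ x, ψ x * h (e x) ∂μ := by
        simpa only [hee' _] using (he.integral_comp he' (fun y => ψ (e' y) * h y)).symm
    _ = ∫ x, ψ x * g x ∂μ := integral_congr_ae (Filter.EventuallyEq.rfl.mul hgh.symm)

end MeasureTheory.MeasurePreserving

theorem MeasureTheory.Integrable.continuous_mul {X : Type*} [TopologicalSpace X]
    [CompactSpace X] [MeasurableSpace X] [OpensMeasurableSpace X] {μ : Measure X}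
    {g c : X → ℝ} (hg : Integrable g μ) (hc : Continuous c) :
    Integrable (fun x => c x * g x) μ :=
  hg.bdd_mul hc.aestronglyMeasurable (ae_of_all _ (ContinuousMap.mk c hc).norm_coe_le_norm)

theorem ae_mul_eq_mul_comp_of_ae_div_eq_div {X : Type*} [MeasurableSpace X] {μ : Measure X}
    {f : X → X} {p q π : X → ℝ} (hq : ∀ x, q x ≠ 0) (hπ : ∀ x, π x ≠ 0)
    (hcob : ∀ᵐ x ∂μ, p x / q (f x) = π (f x) / π x) :
    (fun x => p x * π x) =ᵐ[μ] (fun x => q x * π x) ∘ f := by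
  filter_upwards [hcob] with x hx
  rw [div_eq_div_iff (hq (f x)) (hπ x)] at hx
  rw [Function.comp_apply, hx, mul_comm]

theorem density_cocycle_gives_stationary_measure_general
    {M : Type*} [MetricSpace M] [CompactSpace M]
    [MeasurableSpace M] [BorelSpace M]
    (f : M ≃ₜ M) (μ : Measure M)
    (hinv : Measure.map f μ = μ)
    (p : C(M, ℝ)) (hp : ∀ x, p x ∈ Set.Ioo (0 : ℝ) 1) (q : M → ℝ)
    (hq : ∀ x, q x = 1 - p x)
    (π : M → ℝ) (hπpos : ∀ x, 0 < π x)
    (hπint : Integrable π μ)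
    (hcob : ∀ᵐ x ∂μ, p x / q (f x) = π (f x) / π x) :
    ∀ ψ : C(M, ℝ),
      ∫ x, (p x * ψ (f x) + q x * ψ (f.symm x)) * π x ∂μ = ∫ x, ψ x * π x ∂μ := by
  intro ψ
  have hf : MeasurePreserving f μ μ := ⟨f.continuous.measurable, hinv⟩
  have hflux := ae_mul_eq_mul_comp_of_ae_div_eq_div (μ := μ)
    (fun x => by linarith [hq x, (hp x).2]) (fun x => (hπpos x).ne') hcob
  have hqc : Continuous q := (continuous_const.sub p.continuous).congr fun x => (hq x).symm
  have hpπ := hπint.continuous_mul p.continuous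
  have hqπ := hπint.continuous_mul hqc
  calc ∫ x, (p x * ψ (f x) + q x * ψ (f.symm x)) * π x ∂μ
      = ∫ x, ψ (f x) * (p x * π x) ∂μ + ∫ x, ψ (f.symm x) * (q x * π x) ∂μ := by
        rw [← integral_add (hpπ.continuous_mul (by fun_prop))
          (hqπ.continuous_mul (by fun_prop))]
        congr 1 with x; ring
    _ = ∫ x, ψ x * (q x * π x) ∂μ + ∫ x, ψ x * (p x * π x) ∂μ := by
        rw [hf.integral_comp_mul_of_ae_eq_comp f.measurableEmbedding hflux,
          hf.integral_comp_mul_of_ae_eq_comp_of_leftInverse f.measurableEmbedding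
            f.symm_apply_apply hflux]
    _ = ∫ x, ψ x * π x ∂μ := by
        rw [← integral_add (hqπ.continuous_mul ψ.continuous) (hpπ.continuous_mul ψ.continuous)]
        congr 1 with x; rw [hq]; ring

/-- If `p/(q∘f) = (π∘f)/π` μ-a.e. for a positive integrable `π` of integral `1` and
`μ` is `f`-invariant, then `ν = π·μ` is `P`-stationary:
`∫ (p·ψ∘f + q·ψ∘f⁻¹)·π dμ = ∫ ψ·π dμ` for every continuous `ψ`. -/
theorem density_cocycle_gives_stationary_measure
    {M : Type*} [MetricSpace M] [CompactSpace M]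
    [MeasurableSpace M] [BorelSpace M]
    (f : M ≃ₜ M) (μ : Measure M) [IsProbabilityMeasure μ]
    (hinv : Measure.map f μ = μ)
    (p : C(M, ℝ)) (hp : ∀ x, p x ∈ Set.Ioo (0 : ℝ) 1) (q : M → ℝ)
    (hq : ∀ x, q x = 1 - p x)
    (π : M → ℝ) (hπmeas : Measurable π) (hπpos : ∀ x, 0 < π x)
    (hπint : Integrable π μ) (hπone : ∫ x, π x ∂μ = 1)
    (hcob : ∀ᵐ x ∂μ, p x / q (f x) = π (f x) / π x) :
    ∀ ψ : C(M, ℝ),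
      ∫ x, (p x * ψ (f x) + q x * ψ (f.symm x)) * π x ∂μ = ∫ x, ψ x * π x ∂μ :=
  density_cocycle_gives_stationary_measure_general f μ hinv p hp q hq π hπpos hπint hcob
end
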